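/- arXiv:1206.6230 — 3 statements merged into one kernel-verified Lean document; each statement's English description precedes it below -/
import Mathlib

section
/- Let Σ_UU, Λ be invertible matrices, Σ_YU, Σ_UD matrices with Σ_DU = Σ_UDᵀ, and define Σ̈_UU := Σ_UU + Σ_UD Λ⁻¹ Σ_DU, assumed invertible. Define Γ_YD := Σ_YU Σ_UU⁻¹ Σ_UD and Γ_DD := Σ_DU Σ_UU⁻¹ Σ_UD. Then Γ_YD (Γ_DD + Λ)⁻¹ = Σ_YU Σ̈_UU⁻¹ Σ_UD Λ⁻¹. -/
open Matrix

/-- Key step in the proof of Theorem 1B of the D²FAS paper: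
`Γ_YD (Γ_DD + Λ)⁻¹ = Σ_YU Σ̈_UU⁻¹ Σ_UD Λ⁻¹` where `Σ̈_UU = Σ_UU + Σ_UD Λ⁻¹ Σ_DU`,
`Γ_YD = Σ_YU Σ_UU⁻¹ Σ_UD`, and `Γ_DD = Σ_DU Σ_UU⁻¹ Σ_UD`. -/
theorem pitc_key_identity {u d y : ℕ}
    (SUU : Matrix (Fin u) (Fin u) ℝ) (SUD : Matrix (Fin u) (Fin d) ℝ)
    (SYU : Matrix (Fin y) (Fin u) ℝ) (Λ : Matrix (Fin d) (Fin d) ℝ)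
    (hSUU : IsUnit SUU.det) (hΛ : IsUnit Λ.det)
    (hdd : IsUnit (SUU + SUD * Λ⁻¹ * SUDᵀ).det)
    (hΓΛ : IsUnit (SUDᵀ * SUU⁻¹ * SUD + Λ).det) :
    (SYU * SUU⁻¹ * SUD) * (SUDᵀ * SUU⁻¹ * SUD + Λ)⁻¹ =
      SYU * (SUU + SUD * Λ⁻¹ * SUDᵀ)⁻¹ * SUD * Λ⁻¹ := by
  have h1 : (SUU + SUD * Λ⁻¹ * SUDᵀ) * (SUU⁻¹ * SUD) =
      SUD * Λ⁻¹ * (SUDᵀ * SUU⁻¹ * SUD + Λ) := by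
    rw [Matrix.add_mul, Matrix.mul_add, ← Matrix.mul_assoc SUU,
      Matrix.mul_nonsing_inv _ hSUU, Matrix.one_mul,
      Matrix.mul_assoc SUD Λ⁻¹ Λ, Matrix.nonsing_inv_mul _ hΛ, Matrix.mul_one,
      add_comm]
    simp [Matrix.mul_assoc]
  have h2 : SUU⁻¹ * SUD = (SUU + SUD * Λ⁻¹ * SUDᵀ)⁻¹ *
      (SUD * Λ⁻¹ * (SUDᵀ * SUU⁻¹ * SUD + Λ)) := by
    rw [← h1, ← Matrix.mul_assoc, Matrix.nonsing_inv_mul _ hdd, Matrix.one_mul]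
  calc SYU * SUU⁻¹ * SUD * (SUDᵀ * SUU⁻¹ * SUD + Λ)⁻¹
      = SYU * (SUU⁻¹ * SUD) * (SUDᵀ * SUU⁻¹ * SUD + Λ)⁻¹ := by
        simp [Matrix.mul_assoc]
    _ = SYU * (SUU + SUD * Λ⁻¹ * SUDᵀ)⁻¹ * (SUD * Λ⁻¹) *
        ((SUDᵀ * SUU⁻¹ * SUD + Λ) * (SUDᵀ * SUU⁻¹ * SUD + Λ)⁻¹) := by
        rw [h2]; simp [Matrix.mul_assoc]
    _ = SYU * (SUU + SUD * Λ⁻¹ * SUDᵀ)⁻¹ * SUD * Λ⁻¹ := by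
        rw [Matrix.mul_nonsing_inv _ hΓΛ, Matrix.mul_one]
        simp [Matrix.mul_assoc]
end

section
/- Under the assumptions of the previous identity, the PITC posterior covariance equals the decentralized form: Σ_YY − Γ_YD (Γ_DD + Λ)⁻¹ Γ_DY = Σ_YY − Σ_YU (Σ_UU⁻¹ − Σ̈_UU⁻¹) Σ_UY, where Γ_DY = Γ_YDᵀ and Σ_UY = Σ_YUᵀ. -/
/-!
By the Woodbury identity, `Σ̈_UU⁻¹ = Σ_UU⁻¹ - Σ_UU⁻¹ Σ_UD (Γ_DD + Λ)⁻¹ Σ_DU Σ_UU⁻¹`, so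
`Σ_YU (Σ_UU⁻¹ - Σ̈_UU⁻¹) Σ_UY = Γ_YD (Γ_DD + Λ)⁻¹ (Σ_DU Σ_UU⁻¹ Σ_UY)`, and the last factor is
`Γ_DY` because `Σ_UU⁻¹` is symmetric.
-/

open Matrix

namespace Matrix

variable {m n p q α : Type*} [Fintype m] [Fintype n] [DecidableEq m] [DecidableEq n] [CommRing α]

theorem inv_add_mul_inv_mul_eq_sub (A : Matrix n n α) (U : Matrix n m α) (Λ : Matrix m m α)
    (V : Matrix m n α) (hA : IsUnit A) (hΛ : IsUnit Λ) (hVAUΛ : IsUnit (V * A⁻¹ * U + Λ)) :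
    (A + U * Λ⁻¹ * V)⁻¹ = A⁻¹ - A⁻¹ * U * (V * A⁻¹ * U + Λ)⁻¹ * V * A⁻¹ := by
  have hΛ' : Λ⁻¹⁻¹ = Λ := nonsing_inv_nonsing_inv Λ ((isUnit_iff_isUnit_det Λ).1 hΛ)
  have := add_mul_mul_inv_eq_sub A U Λ⁻¹ V hA (isUnit_nonsing_inv_iff.2 hΛ)
    (by rwa [hΛ', add_comm])
  rwa [hΛ', add_comm Λ] at this

theorem mul_inv_sub_inv_add_mul_inv_mul (B : Matrix p n α) (A : Matrix n n α)
    (U : Matrix n m α) (Λ : Matrix m m α) (V : Matrix m n α) (C : Matrix n q α)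
    (hA : IsUnit A) (hΛ : IsUnit Λ) (hVAUΛ : IsUnit (V * A⁻¹ * U + Λ)) :
    B * (A⁻¹ - (A + U * Λ⁻¹ * V)⁻¹) * C =
      B * A⁻¹ * U * (V * A⁻¹ * U + Λ)⁻¹ * (V * A⁻¹ * C) := by
  rw [inv_add_mul_inv_mul_eq_sub A U Λ V hA hΛ hVAUΛ, sub_sub_cancel]
  simp only [Matrix.mul_assoc]

end Matrix

theorem pitc_covariance_equivalence_general {u d y : ℕ}
    (SUU : Matrix (Fin u) (Fin u) ℝ) (SUD : Matrix (Fin u) (Fin d) ℝ)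
    (SYU : Matrix (Fin y) (Fin u) ℝ) (SYY : Matrix (Fin y) (Fin y) ℝ)
    (Λ : Matrix (Fin d) (Fin d) ℝ)
    (hSym : SUU.IsSymm)
    (hSUU : IsUnit SUU.det) (hΛ : IsUnit Λ.det)
    (hΓΛ : IsUnit (SUDᵀ * SUU⁻¹ * SUD + Λ).det) :
    SYY - (SYU * SUU⁻¹ * SUD) * (SUDᵀ * SUU⁻¹ * SUD + Λ)⁻¹ * (SYU * SUU⁻¹ * SUD)ᵀ =
      SYY - SYU * (SUU⁻¹ - (SUU + SUD * Λ⁻¹ * SUDᵀ)⁻¹) * SYUᵀ := by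
  have hΓYD : (SYU * SUU⁻¹ * SUD)ᵀ = SUDᵀ * SUU⁻¹ * SYUᵀ := by
    rw [transpose_mul, transpose_mul, hSym.inv.eq, Matrix.mul_assoc]
  rw [hΓYD, mul_inv_sub_inv_add_mul_inv_mul SYU SUU SUD Λ SUDᵀ SYUᵀ
    ((isUnit_iff_isUnit_det _).2 hSUU) ((isUnit_iff_isUnit_det _).2 hΛ)
    ((isUnit_iff_isUnit_det _).2 hΓΛ)]

/-- Theorem 1B (covariance part) of the D²FAS paper: the PITC posterior covariance equals
the decentralized form,
`Σ_YY − Γ_YD (Γ_DD + Λ)⁻¹ Γ_DY = Σ_YY − Σ_YU (Σ_UU⁻¹ − Σ̈_UU⁻¹) Σ_UY`. -/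
theorem pitc_covariance_equivalence {u d y : ℕ}
    (SUU : Matrix (Fin u) (Fin u) ℝ) (SUD : Matrix (Fin u) (Fin d) ℝ)
    (SYU : Matrix (Fin y) (Fin u) ℝ) (SYY : Matrix (Fin y) (Fin y) ℝ)
    (Λ : Matrix (Fin d) (Fin d) ℝ)
    (hSym : SUU.IsSymm)
    (hSUU : IsUnit SUU.det) (hΛ : IsUnit Λ.det)
    (hdd : IsUnit (SUU + SUD * Λ⁻¹ * SUDᵀ).det)
    (hΓΛ : IsUnit (SUDᵀ * SUU⁻¹ * SUD + Λ).det) :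
    SYY - (SYU * SUU⁻¹ * SUD) * (SUDᵀ * SUU⁻¹ * SUD + Λ)⁻¹ * (SYU * SUU⁻¹ * SUD)ᵀ =
      SYY - SYU * (SUU⁻¹ - (SUU + SUD * Λ⁻¹ * SUDᵀ)⁻¹) * SYUᵀ :=
  pitc_covariance_equivalence_general SUU SUD SYU SYY Λ hSym hSUU hΛ hΓΛ
end

section
/- Under the assumptions of Theorem 1B, the PITC posterior mean equals the decentralized form: μ_Y + Γ_YD (Γ_DD + Λ)⁻¹ (z_D − μ_D) = μ_Y + Σ_YU Σ̈_UU⁻¹ z̈_U, where z̈_U := Σ_UD Λ⁻¹ (z_D − μ_D). -/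
open Matrix

/-- Theorem 1B (mean part) of the D²FAS paper: the PITC posterior mean equals the
decentralized form,
`μ_Y + Γ_YD (Γ_DD + Λ)⁻¹ (z_D − μ_D) = μ_Y + Σ_YU Σ̈_UU⁻¹ z̈_U` where
`z̈_U = Σ_UD Λ⁻¹ (z_D − μ_D)`. -/
theorem pitc_mean_equivalence {u d y : ℕ}
    (SUU : Matrix (Fin u) (Fin u) ℝ) (SUD : Matrix (Fin u) (Fin d) ℝ)
    (SYU : Matrix (Fin y) (Fin u) ℝ) (Λ : Matrix (Fin d) (Fin d) ℝ)
    (zD μD : Fin d → ℝ) (μY : Fin y → ℝ)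
    (hSUU : IsUnit SUU.det) (hΛ : IsUnit Λ.det)
    (hdd : IsUnit (SUU + SUD * Λ⁻¹ * SUDᵀ).det)
    (hΓΛ : IsUnit (SUDᵀ * SUU⁻¹ * SUD + Λ).det) :
    μY + ((SYU * SUU⁻¹ * SUD) * (SUDᵀ * SUU⁻¹ * SUD + Λ)⁻¹) *ᵥ (zD - μD) =
      μY + (SYU * (SUU + SUD * Λ⁻¹ * SUDᵀ)⁻¹) *ᵥ ((SUD * Λ⁻¹) *ᵥ (zD - μD)) := by
  have e1 : (SUU + SUD * Λ⁻¹ * SUDᵀ) * (SUU⁻¹ * SUD)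
      = SUD * Λ⁻¹ * (SUDᵀ * SUU⁻¹ * SUD + Λ) := by
    rw [Matrix.add_mul, Matrix.mul_add, ← Matrix.mul_assoc SUU, Matrix.mul_nonsing_inv SUU hSUU,
      Matrix.one_mul, Matrix.nonsing_inv_mul_cancel_right Λ SUD hΛ, add_comm]
    congr 1
    rw [Matrix.mul_assoc (SUD * Λ⁻¹), ← Matrix.mul_assoc SUDᵀ]
  have h1 : (SUU + SUD * Λ⁻¹ * SUDᵀ) * (SUU⁻¹ * SUD * (SUDᵀ * SUU⁻¹ * SUD + Λ)⁻¹)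
      = SUD * Λ⁻¹ := by
    rw [← Matrix.mul_assoc, e1, Matrix.mul_assoc, Matrix.mul_nonsing_inv _ hΓΛ, Matrix.mul_one]
  have key : SUU⁻¹ * SUD * (SUDᵀ * SUU⁻¹ * SUD + Λ)⁻¹
      = (SUU + SUD * Λ⁻¹ * SUDᵀ)⁻¹ * (SUD * Λ⁻¹) := by
    have h2 := congrArg (fun M => (SUU + SUD * Λ⁻¹ * SUDᵀ)⁻¹ * M) h1
    simp only [← Matrix.mul_assoc, Matrix.nonsing_inv_mul _ hdd, Matrix.one_mul] at h2
    rw [h2, Matrix.mul_assoc]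
  rw [Matrix.mulVec_mulVec]
  congr 1
  rw [Matrix.mul_assoc SYU, Matrix.mul_assoc SYU, key,
    ← Matrix.mul_assoc]
end
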